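/- Suppose 𝒫 is stable under F°-pasting and every P ∈ 𝒫 satisfies the augmentation hypothesis. Then 𝒫 is stable under F̂-pasting: for every P ∈ 𝒫, every F̂-stopping time τ taking finitely many values, every Λ ∈ F̂_τ and all P₁, P₂ ∈ 𝒫(F̂_τ,P), the probability measure P̄ on (Ω,F°_T) determined by ∫ h dP̄ = E^P[1_Λ·E^{P₁}[h|F̂_τ] + 1_{Λᶜ}·E^{P₂}[h|F̂_τ]] for every bounded F°_T-measurable h : Ω → ℝ belongs to 𝒫. -/

import Mathlib

/-! By the augmentation hypothesis, each `{τ = u}` and `Λ ∩ {τ = u}` agrees `P`-a.s. with an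
`F°_u`-set. The first time `ω` enters one of the approximations of the sets `{τ = u}` is an
`F°`-stopping time `τ'` with `τ = τ'` `P`-a.s., and `Λ` is `P`-a.s. equal to some `Λ' ∈ F°_{τ'}`.
Since `{τ = τ'} ∈ F̂_τ`, every measure agreeing with `P` on `F̂_τ` also agrees with it on
`F̂_{τ'} ⊇ F°_{τ'}` and sees `Λ = Λ'` a.s. Hence the `F̂`-pasting over `(Λ, τ)` is the
`F°`-pasting over `(Λ', τ')`, which lies in `𝔓`. -/

open MeasureTheory Set Filter

noncomputable section

/-- The canonical path space: continuous paths in `ℝ^d` starting at `0`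
(paths indexed by `ℝ`; only the restriction to `[0,T]` is ever used). -/
def PathSpace (d : ℕ) : Type :=
  {ω : C(ℝ, EuclideanSpace ℝ (Fin d)) // ω 0 = 0}

/-- The raw σ-algebra `F°_t = σ(B_s ; 0 ≤ s ≤ t)` generated by the canonical process. -/
def rawSA (d : ℕ) (t : ℝ) : MeasurableSpace (PathSpace d) :=
  ⨆ s ∈ Set.Icc (0 : ℝ) t, MeasurableSpace.comap (fun ω : PathSpace d => ω.1 s) inferInstance

lemma rawSA_mono {d : ℕ} : Monotone (rawSA d) := by
  intro s t hst
  refine iSup₂_le fun u hu => ?_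
  exact le_iSup₂_of_le u ⟨hu.1, hu.2.trans hst⟩ le_rfl

/-- The raw filtration `F°`, as a filtration indexed by `ℝ` (constant after time `T`),
with ambient σ-algebra `F°_T`. -/
def rawFilt (T : ℝ) (d : ℕ) : Filtration ℝ (rawSA d T) where
  seq t := rawSA d (min t T)
  mono' := fun _ _ hst => rawSA_mono (min_le_min hst le_rfl)
  le' := fun t => rawSA_mono (min_le_right t T)

/-- A bounded function. -/
def BddFun {α : Type*} (f : α → ℝ) : Prop := ∃ C : ℝ, ∀ x, |f x| ≤ C

/-- `Y` is a `P`-essential supremum of the family `F` of random variables. -/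
def IsEssSupOf {α : Type*} {m0 : MeasurableSpace α} (P : @Measure α m0) (F : Set (α → ℝ))
    (Y : α → ℝ) : Prop :=
  (∀ f ∈ F, f ≤ᵐ[P] Y) ∧ ∀ Z : α → ℝ, (∀ f ∈ F, f ≤ᵐ[P] Z) → Y ≤ᵐ[P] Z

/-- Two measures agree on the σ-algebra `G`. -/
def EqOnSA {α : Type*} {m0 : MeasurableSpace α} (G : MeasurableSpace α)
    (P Q : @Measure α m0) : Prop :=
  ∀ A : Set α, MeasurableSet[G] A → P A = Q A

/-- `𝔓(G, P) = {P' ∈ 𝔓 : P' = P on G}`. -/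
def MSet {α : Type*} {m0 : MeasurableSpace α} (𝔓 : Set (@Measure α m0))
    (G : MeasurableSpace α) (P : @Measure α m0) : Set (@Measure α m0) :=
  {Q ∈ 𝔓 | EqOnSA G Q P}

/-- The family `{E^{P'}[X | G] : P' ∈ 𝔓(G, P)}` of conditional expectations. -/
def condExpFam {α : Type*} {m0 : MeasurableSpace α} (𝔓 : Set (@Measure α m0))
    (G : MeasurableSpace α) (P : @Measure α m0) (X : α → ℝ) : Set (α → ℝ) :=
  {g | ∃ Q ∈ MSet 𝔓 G P, g = condExp G Q X}

/-- `X ∈ L¹_𝔓` : `mT`-measurable with `sup_{P ∈ 𝔓} E^P[|X|] < ∞`. -/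
def MemL1 {α : Type*} {m0 : MeasurableSpace α} (mT : MeasurableSpace α)
    (𝔓 : Set (@Measure α m0)) (X : α → ℝ) : Prop :=
  Measurable[mT] X ∧ (∀ P ∈ 𝔓, Integrable X P) ∧ ∃ M : ℝ, ∀ P ∈ 𝔓, ∫ ω, |X ω| ∂P ≤ M

/-- `Pb` is the pasting of `(P₁, P₂)` over `(Λ, G)` under `P`, characterized through
integrals of bounded measurable functions. -/
def IsPastingOf {α : Type*} {m0 : MeasurableSpace α} (mT : MeasurableSpace α)
    (G : MeasurableSpace α) (P P₁ P₂ Pb : @Measure α m0) (Λ : Set α) : Prop :=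
  ∀ h : α → ℝ, Measurable[mT] h → BddFun h →
    ∫ x, h x ∂Pb
      = ∫ x, (Λ.indicator (condExp G P₁ h) x + Λᶜ.indicator (condExp G P₂ h) x) ∂P

/-- `𝔓` is stable under `F°`-pasting (along finite-valued `F°`-stopping times). -/
def StableUnderPasting (T : ℝ) (d : ℕ)
    (𝔓 : Set (@Measure (PathSpace d) (rawSA d T))) : Prop :=
  ∀ P ∈ 𝔓, ∀ τ : PathSpace d → ℝ, ∀ hτ : IsStoppingTime (rawFilt T d) (fun ω => (τ ω : WithTop ℝ)),
    (Set.range τ).Finite → (∀ ω, τ ω ∈ Set.Icc (0 : ℝ) T) →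
    ∀ Λ : Set (PathSpace d), MeasurableSet[hτ.measurableSpace] Λ →
    ∀ P₁ ∈ MSet 𝔓 hτ.measurableSpace P, ∀ P₂ ∈ MSet 𝔓 hτ.measurableSpace P,
    ∀ Pb : @Measure (PathSpace d) (rawSA d T),
      IsPastingOf (rawSA d T) hτ.measurableSpace P P₁ P₂ Pb Λ → Pb ∈ 𝔓


/-- The right-continuous filtration `F⁺`: `F⁺_t = ∩_{s ∈ (t,T]} F°_s` for `t < T`
and `F⁺_T = F°_T` (realized as `⨅_{s > t} F°_{min s T}`). -/
def FplusSA (T : ℝ) (d : ℕ) (t : ℝ) : MeasurableSpace (PathSpace d) :=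
  ⨅ s ∈ Set.Ioi t, rawSA d (min s T)

lemma FplusSA_mono (T : ℝ) (d : ℕ) : Monotone (FplusSA T d) := by
  intro s t hst
  exact le_iInf₂ fun u hu => iInf₂_le u (lt_of_le_of_lt hst hu)

lemma FplusSA_le (T : ℝ) (d : ℕ) (t : ℝ) : FplusSA T d t ≤ rawSA d T := by
  have h1 : (max t T + 1) ∈ Set.Ioi t := by
    simp only [Set.mem_Ioi]
    have := le_max_left t T
    linarith
  have h2 : min (max t T + 1) T = T := by
    have := le_max_right t T
    exact min_eq_right (by linarith)
  have := iInf₂_le (f := fun (s : ℝ) (_ : s ∈ Set.Ioi t) => rawSA d (min s T)) (max t T + 1) h1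
  rwa [h2] at this

/-- The collection of `𝔓`-polar sets. -/
def IsPolar {α : Type*} {m0 : MeasurableSpace α} (𝔓 : Set (@Measure α m0)) (N : Set α) : Prop :=
  ∀ P ∈ 𝔓, P N = 0

/-- The augmented σ-algebra `F̂_t = σ(F⁺_t ∪ N^𝔓)`. -/
def FhatSA (T : ℝ) (d : ℕ) {m0 : MeasurableSpace (PathSpace d)}
    (𝔓 : Set (@Measure (PathSpace d) m0)) (t : ℝ) : MeasurableSpace (PathSpace d) :=
  FplusSA T d t ⊔ MeasurableSpace.generateFrom {N | IsPolar 𝔓 N}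

/-- The filtration `F̂`, with an ambient σ-algebra `m0` containing `F°_T` and the polar sets
(the measures of `𝔓` being understood as (uniquely) extended to `m0`). -/
def FhatFilt (T : ℝ) (d : ℕ) {m0 : MeasurableSpace (PathSpace d)}
    (𝔓 : Set (@Measure (PathSpace d) m0))
    (hB : rawSA d T ≤ m0)
    (hN : MeasurableSpace.generateFrom {N | IsPolar 𝔓 N} ≤ m0) :
    Filtration ℝ m0 where
  seq t := FhatSA T d 𝔓 t
  mono' := fun _ _ hst => sup_le_sup_right (FplusSA_mono T d hst) _
  le' := fun t => sup_le ((FplusSA_le T d t).trans hB) hN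

/-- The augmentation hypothesis for `P`: every set in `F̂_t` agrees with a set in `F°_t`
up to a `P`-null set, for every `t ∈ [0,T]`. -/
def AugHyp (T : ℝ) (d : ℕ) {m0 : MeasurableSpace (PathSpace d)}
    (𝔓 : Set (@Measure (PathSpace d) m0)) (P : @Measure (PathSpace d) m0) : Prop :=
  ∀ t ∈ Set.Icc (0 : ℝ) T, ∀ A : Set (PathSpace d), MeasurableSet[FhatSA T d 𝔓 t] A →
    ∃ A' : Set (PathSpace d), MeasurableSet[rawSA d t] A' ∧ P (symmDiff A A') = 0

/-- Stability of `𝔓` under `F°`-pasting, for measures given on the ambient σ-algebra `m0`: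
the pasting, which is a measure on `F°_T`, coincides on `F°_T` with an element of `𝔓`. -/
def StableUnderPastingE (T : ℝ) (d : ℕ) {m0 : MeasurableSpace (PathSpace d)}
    (𝔓 : Set (@Measure (PathSpace d) m0)) : Prop :=
  ∀ P ∈ 𝔓, ∀ τ : PathSpace d → ℝ, ∀ hτ : IsStoppingTime (rawFilt T d) (fun ω => (τ ω : WithTop ℝ)),
    (Set.range τ).Finite → (∀ ω, τ ω ∈ Set.Icc (0 : ℝ) T) →
    ∀ Λ : Set (PathSpace d), MeasurableSet[hτ.measurableSpace] Λ →
    ∀ P₁ ∈ MSet 𝔓 hτ.measurableSpace P, ∀ P₂ ∈ MSet 𝔓 hτ.measurableSpace P,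
    ∃ Q ∈ 𝔓, ∀ h : PathSpace d → ℝ, Measurable[rawSA d T] h → BddFun h →
      ∫ x, h x ∂Q
        = ∫ x, (Λ.indicator (condExp hτ.measurableSpace P₁ h) x
            + Λᶜ.indicator (condExp hτ.measurableSpace P₂ h) x) ∂P

/-- A real path which is càdlàg on `[0,T]`: right-continuous on `[0,T)` and with finite
left limits on `(0,T]`. -/
def IsCadlagPath (T : ℝ) (f : ℝ → ℝ) : Prop :=
  (∀ t ∈ Set.Ico (0 : ℝ) T, Tendsto f (nhdsWithin t (Set.Ioi t)) (nhds (f t))) ∧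
  (∀ t ∈ Set.Ioc (0 : ℝ) T, ∃ L : ℝ, Tendsto f (nhdsWithin t (Set.Ico 0 t)) (nhds L))

end


section StoppingTime

variable {Ω ι : Type*} {m mF : MeasurableSpace Ω}

lemma MeasureTheory.IsStoppingTime.of_filtration_le [Preorder ι] {F : Filtration ι mF}
    {G : Filtration ι m} (hFG : ∀ i, F i ≤ G i) {τ : Ω → WithTop ι} (hτ : IsStoppingTime F τ) :
    IsStoppingTime G τ :=
  fun i => hFG i _ (hτ i)

lemma MeasureTheory.IsStoppingTime.measurableSpace_le_of_filtration_le [Preorder ι]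
    {F : Filtration ι mF} {G : Filtration ι m} (hFG : ∀ i, F i ≤ G i) {τ : Ω → WithTop ι}
    (hτ : IsStoppingTime F τ) :
    hτ.measurableSpace ≤ (hτ.of_filtration_le hFG).measurableSpace :=
  fun _ hA => ⟨iSup_mono hFG _ hA.1, fun i => hFG i _ (hA.2 i)⟩

lemma Set.Finite.countable_range_coe_withTop {τ : Ω → ι} (hτ : (Set.range τ).Finite) :
    (Set.range fun ω => (τ ω : WithTop ι)).Countable := by
  rw [Set.range_comp' ((↑) : ι → WithTop ι) τ]
  exact (hτ.image _).countable

lemma MeasureTheory.IsStoppingTime.measurableSet_inter_eq_stopping_time [LinearOrder ι]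
    [TopologicalSpace ι] [OrderTopology ι] [SecondCountableTopology ι] {G : Filtration ι m}
    {τ π : Ω → WithTop ι} (hτ : IsStoppingTime G τ) (hπ : IsStoppingTime G π) {A : Set Ω}
    (hA : MeasurableSet[hπ.measurableSpace] A) :
    MeasurableSet[hτ.measurableSpace] (A ∩ {ω | τ ω = π ω}) := by
  have hle : MeasurableSet[hτ.measurableSpace] (A ∩ {ω | π ω ≤ τ ω}) :=
    ((hπ.measurableSet_min_iff hτ _).1 (hπ.measurableSet_inter_le hτ A hA)).2
  convert hle.inter (hτ.measurableSet_eq_stopping_time hπ) using 1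
  ext ω
  simp only [mem_inter_iff, mem_ofPred_eq]
  grind

end StoppingTime

section EqOnSA

variable {α : Type*} {G H m0 : MeasurableSpace α} {P Q : Measure[m0] α}

lemma EqOnSA.mono (hQP : EqOnSA G Q P) (hHG : H ≤ G) : EqOnSA H Q P :=
  fun A hA => hQP A (hHG A hA)

lemma EqOnSA.measure_eq_zero (hQP : EqOnSA G Q P) {N : Set α} (hN : MeasurableSet[G] N)
    (hPN : P N = 0) : Q N = 0 :=
  (hQP N hN).trans hPN

lemma EqOnSA.ae_eq (hQP : EqOnSA G Q P) {A B : Set α} (hA : MeasurableSet[G] A)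
    (hB : MeasurableSet[G] B) (hAB : A =ᵐ[P] B) : A =ᵐ[Q] B := by
  rw [← measure_symmDiff_eq_zero_iff] at hAB ⊢
  exact hQP.measure_eq_zero (hA.symmDiff hB) hAB

lemma EqOnSA.of_inter_conull (hQP : EqOnSA G Q P) {E : Set α} (hE : MeasurableSet[G] E)
    (hPE : ∀ᵐ x ∂P, x ∈ E) (hHG : ∀ A, MeasurableSet[H] A → MeasurableSet[G] (A ∩ E)) :
    EqOnSA H Q P := by
  have hQE : Q Eᶜ = 0 := hQP.measure_eq_zero hE.compl hPE
  intro A hA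
  rw [← measure_inter_conull hQE, hQP _ (hHG A hA), measure_inter_conull (t := E) hPE]

lemma EqOnSA.trim_eq (hG : G ≤ m0) (hQP : EqOnSA G Q P) : Q.trim hG = P.trim hG :=
  @Measure.ext α G _ _ fun A hA => by
    rw [trim_measurableSet_eq hG hA, trim_measurableSet_eq hG hA, hQP A hA]

lemma EqOnSA.integrable (hG : G ≤ m0) (hQP : EqOnSA G Q P) {f : α → ℝ}
    (hf : StronglyMeasurable[G] f) (hfQ : Integrable f Q) : Integrable f P :=
  integrable_of_integrable_trim hG (hQP.trim_eq hG ▸ hfQ.trim hG hf)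

lemma EqOnSA.integral_eq (hG : G ≤ m0) (hQP : EqOnSA G Q P) {f : α → ℝ}
    (hf : StronglyMeasurable[G] f) : ∫ x, f x ∂Q = ∫ x, f x ∂P := by
  rw [integral_trim hG hf, integral_trim hG hf, hQP.trim_eq hG]

lemma EqOnSA.integral_indicator_condExp (hG : G ≤ m0) [IsFiniteMeasure Q] (hQP : EqOnSA G Q P)
    {Λ : Set α} (hΛ : MeasurableSet[G] Λ) {h : α → ℝ} (hh : Integrable h Q) :
    ∫ x, Λ.indicator (condExp G Q h) x ∂P = ∫ x in Λ, h x ∂Q := by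
  rw [← hQP.integral_eq hG (stronglyMeasurable_condExp.indicator hΛ),
    integral_indicator (hG _ hΛ), setIntegral_condExp hG hh hΛ]

lemma EqOnSA.integrable_indicator_condExp (hG : G ≤ m0) (hQP : EqOnSA G Q P) {Λ : Set α}
    (hΛ : MeasurableSet[G] Λ) (h : α → ℝ) : Integrable (Λ.indicator (condExp G Q h)) P :=
  hQP.integrable hG (stronglyMeasurable_condExp.indicator hΛ)
    (integrable_condExp.indicator (hG _ hΛ))

lemma integral_pasting_eq {P₁ P₂ : Measure[m0] α} (hG : G ≤ m0) [IsFiniteMeasure P₁]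
    [IsFiniteMeasure P₂] (h₁ : EqOnSA G P₁ P) (h₂ : EqOnSA G P₂ P) {Λ : Set α}
    (hΛ : MeasurableSet[G] Λ) {h : α → ℝ} (hh₁ : Integrable h P₁) (hh₂ : Integrable h P₂) :
    ∫ x, (Λ.indicator (condExp G P₁ h) x + Λᶜ.indicator (condExp G P₂ h) x) ∂P
      = ∫ x in Λ, h x ∂P₁ + ∫ x in Λᶜ, h x ∂P₂ := by
  rw [integral_add (h₁.integrable_indicator_condExp hG hΛ h)
      (h₂.integrable_indicator_condExp hG hΛ.compl h),
    h₁.integral_indicator_condExp hG hΛ hh₁, h₂.integral_indicator_condExp hG hΛ.compl hh₂]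

section StoppingTime

variable {ι : Type*} [LinearOrder ι] [TopologicalSpace ι] [OrderTopology ι]
  [SecondCountableTopology ι] {F : Filtration ι m0} {τ π : α → WithTop ι}

lemma EqOnSA.of_ae_eq_stoppingTime (hτ : IsStoppingTime F τ) (hπ : IsStoppingTime F π)
    (hQP : EqOnSA hτ.measurableSpace Q P) (hτπ : ∀ᵐ x ∂P, τ x = π x) :
    EqOnSA hπ.measurableSpace Q P :=
  hQP.of_inter_conull (hτ.measurableSet_eq_stopping_time hπ) hτπ fun _ hA =>
    hτ.measurableSet_inter_eq_stopping_time hπ hA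

lemma EqOnSA.ae_eq_of_ae_eq_stoppingTime (hτ : IsStoppingTime F τ) (hπ : IsStoppingTime F π)
    (hQP : EqOnSA hτ.measurableSpace Q P) (hτπ : ∀ᵐ x ∂P, τ x = π x) {Λ Λ' : Set α}
    (hΛ : MeasurableSet[hτ.measurableSpace] Λ) (hΛ' : MeasurableSet[hπ.measurableSpace] Λ')
    (hΛΛ' : Λ =ᵐ[P] Λ') : Λ =ᵐ[Q] Λ' := by
  have hE := hτ.measurableSet_eq_stopping_time hπ
  have hQE : ∀ᵐ x ∂Q, τ x = π x := hQP.measure_eq_zero hE.compl hτπ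
  have inter_ae_eq : ∀ μ : Measure α, (∀ᵐ x ∂μ, τ x = π x) →
      (Λ' ∩ {x | τ x = π x} : Set α) =ᵐ[μ] Λ' := fun μ hμ => by
    filter_upwards [hμ] with x hx
    exact propext (and_iff_left hx)
  exact (hQP.ae_eq hΛ (hτ.measurableSet_inter_eq_stopping_time hπ hΛ')
    (hΛΛ'.trans (inter_ae_eq P hτπ).symm)).trans (inter_ae_eq Q hQE)

end StoppingTime

end EqOnSA

section Approximation

variable {Ω ι : Type*} [LinearOrder ι] {mF m0 : MeasurableSpace Ω} {F : Filtration ι mF}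
  {G : Filtration ι m0} {P : Measure[m0] Ω} {τ : Ω → ι}

lemma MeasureTheory.IsStoppingTime.measurableSet_eq_of_finite_range
    (hτ : IsStoppingTime G fun ω => (τ ω : WithTop ι)) (hfin : (Set.range τ).Finite) (u : ι) :
    MeasurableSet[G u] {ω | τ ω = u} := by
  simpa using hτ.measurableSet_eq_of_countable_range hfin.countable_range_coe_withTop u

theorem exists_isStoppingTime_ae_eq (hτ : IsStoppingTime G fun ω => (τ ω : WithTop ι))
    (hfin : (Set.range τ).Finite) {t₀ : ι} (ht₀ : ∀ ω, τ ω ≤ t₀)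
    (hAug : ∀ u ∈ Set.range τ, ∀ A, MeasurableSet[G u] A →
      ∃ A', MeasurableSet[F u] A' ∧ A =ᵐ[P] A') :
    ∃ π : Ω → ι, IsStoppingTime F (fun ω => (π ω : WithTop ι)) ∧
      Set.range π ⊆ insert t₀ (Set.range τ) ∧ ∀ᵐ ω ∂P, τ ω = π ω := by
  classical
  set s := hfin.toFinset
  have hA : ∀ u ∈ s, ∃ A', MeasurableSet[F u] A' ∧ {ω | τ ω = u} =ᵐ[P] A' := fun u hu =>
    hAug u (hfin.mem_toFinset.1 hu) _ (hτ.measurableSet_eq_of_finite_range hfin u)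
  choose! A hAF hAP using hA
  let π ω := (insert t₀ (s.filter (ω ∈ A ·))).inf' (Finset.insert_nonempty _ _) id
  refine ⟨π, fun i => ?_, ?_, ?_⟩
  · have hπ_le :
        {ω | (π ω : WithTop ι) ≤ i} = {_ω | t₀ ≤ i} ∪ ⋃ u ∈ s.filter (· ≤ i), A u := by
      ext ω
      simp only [mem_ofPred_eq, WithTop.coe_le_coe, π, Finset.inf'_le_iff, id, Finset.mem_insert,
        Finset.mem_filter, mem_union, mem_iUnion, exists_prop]
      grind
    rw [hπ_le]
    refine (MeasurableSet.const _).union (Finset.measurableSet_biUnion _ fun u hu => ?_)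
    rw [Finset.mem_filter] at hu
    exact F.mono hu.2 _ (hAF u hu.1)
  · rintro _ ⟨ω, rfl⟩
    obtain ⟨u, hu, hπu⟩ :=
      Finset.exists_mem_eq_inf' (Finset.insert_nonempty t₀ (s.filter (ω ∈ A ·))) id
    rw [Finset.mem_insert, Finset.mem_filter, hfin.mem_toFinset] at hu
    rw [show π ω = u from hπu]
    exact hu.imp_right And.left
  · filter_upwards [(eventually_all_finset s).2 hAP] with ω hω
    have hτs : τ ω ∈ s := hfin.mem_toFinset.2 ⟨ω, rfl⟩
    refine le_antisymm (Finset.le_inf' _ _ fun u hu => ?_) (Finset.inf'_le _ ?_)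
    · rcases Finset.mem_insert.1 hu with rfl | hu
      · exact ht₀ ω
      · rw [Finset.mem_filter] at hu
        exact le_of_eq ((hω u hu.1).mpr hu.2)
    · exact Finset.mem_insert_of_mem (Finset.mem_filter.2 ⟨hτs, (hω _ hτs).mp rfl⟩)

theorem exists_measurableSet_ae_eq (hτ : IsStoppingTime G fun ω => (τ ω : WithTop ι))
    (hfin : (Set.range τ).Finite) {π : Ω → ι} (hπ : IsStoppingTime F fun ω => (π ω : WithTop ι))
    (hπfin : (Set.range π).Finite) (hτπ : ∀ᵐ ω ∂P, τ ω = π ω)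
    (hAug : ∀ u ∈ Set.range τ, ∀ A, MeasurableSet[G u] A →
      ∃ A', MeasurableSet[F u] A' ∧ A =ᵐ[P] A')
    {Λ : Set Ω} (hΛ : MeasurableSet[hτ.measurableSpace] Λ) :
    ∃ Λ', MeasurableSet[hπ.measurableSpace] Λ' ∧ Λ =ᵐ[P] Λ' := by
  classical
  set s := hfin.toFinset
  have hL : ∀ u ∈ s, ∃ L, MeasurableSet[F u] L ∧ (Λ ∩ {ω | τ ω = u} : Set Ω) =ᵐ[P] L :=
    fun u hu => hAug u (hfin.mem_toFinset.1 hu) _ (by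
      have := (hτ.measurableSet_inter_eq_iff Λ u).1
        (hΛ.inter (hτ.measurableSet_eq_of_countable_range' hfin.countable_range_coe_withTop u))
      simpa using this)
  choose! L hLF hLP using hL
  refine ⟨⋃ u ∈ s, L u ∩ {ω | (π ω : WithTop ι) = u},
    Finset.measurableSet_biUnion _ fun u hu => (hπ.measurableSet_inter_eq_iff _ u).2
      ((hLF u hu).inter
        (hπ.measurableSet_eq_of_countable_range hπfin.countable_range_coe_withTop u)), ?_⟩
  filter_upwards [hτπ, (eventually_all_finset s).2 hLP] with ω hτπω hω
  have hτs : τ ω ∈ s := hfin.mem_toFinset.2 ⟨ω, rfl⟩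
  have hΛL : (ω ∈ Λ ∧ τ ω = τ ω) = (ω ∈ L (τ ω)) := hω _ hτs
  change (ω ∈ Λ) = (ω ∈ ⋃ u ∈ s, L u ∩ {ω | (π ω : WithTop ι) = u})
  simp only [mem_iUnion, mem_inter_iff, mem_ofPred_eq, WithTop.coe_inj, exists_prop,
    ← hτπω, and_true] at hΛL ⊢
  rw [hΛL]
  exact propext ⟨fun h => ⟨_, hτs, h, rfl⟩, fun ⟨_, _, h, hu⟩ => hu ▸ h⟩

end Approximation

section PathSpace

variable {T : ℝ} {d : ℕ} {m0 : MeasurableSpace (PathSpace d)} {𝔓 : Set (Measure[m0] (PathSpace d))}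

lemma rawFilt_le_FhatFilt (hB : rawSA d T ≤ m0)
    (hN : MeasurableSpace.generateFrom {N | IsPolar 𝔓 N} ≤ m0) (t : ℝ) :
    rawFilt T d t ≤ FhatFilt T d 𝔓 hB hN t := by
  change rawSA d (min t T) ≤ FplusSA T d t ⊔ _
  exact le_sup_of_le_left (le_iInf₂ fun _ hs => rawSA_mono (min_le_min (le_of_lt hs) le_rfl))

lemma AugHyp.exists_ae_eq {P : Measure[m0] (PathSpace d)} (hP : AugHyp T d 𝔓 P)
    (hB : rawSA d T ≤ m0) (hN : MeasurableSpace.generateFrom {N | IsPolar 𝔓 N} ≤ m0) {t : ℝ}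
    (ht : t ∈ Icc 0 T) (A : Set (PathSpace d)) (hA : MeasurableSet[FhatFilt T d 𝔓 hB hN t] A) :
    ∃ A', MeasurableSet[rawFilt T d t] A' ∧ A =ᵐ[P] A' := by
  obtain ⟨A', hA', hAA'⟩ := hP t ht A hA
  refine ⟨A', ?_, measure_symmDiff_eq_zero_iff.1 hAA'⟩
  change MeasurableSet[rawSA d (min t T)] A'
  rwa [min_eq_left ht.2]

end PathSpace

lemma BddFun.integrable {α : Type*} {mT m0 : MeasurableSpace α} (hmT : mT ≤ m0) {h : α → ℝ}
    (hmeas : Measurable[mT] h) (hbdd : BddFun h) (μ : Measure[m0] α) [IsFiniteMeasure μ] :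
    Integrable h μ := by
  obtain ⟨C, hC⟩ := hbdd
  exact Integrable.of_bound (hmeas.mono hmT le_rfl).aestronglyMeasurable C (ae_of_all _ hC)

theorem statement6_general {T : ℝ} (hT : 0 < T) {d : ℕ}
    {m0 : MeasurableSpace (PathSpace d)}
    (𝔓 : Set (@Measure (PathSpace d) m0))
    (hprob : ∀ P ∈ 𝔓, IsProbabilityMeasure P)
    (hB : rawSA d T ≤ m0)
    (hN : MeasurableSpace.generateFrom {N | IsPolar 𝔓 N} ≤ m0)
    (hstable : StableUnderPastingE T d 𝔓)
    (hAug : ∀ P ∈ 𝔓, AugHyp T d 𝔓 P)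
    (P : @Measure (PathSpace d) m0) (hP : P ∈ 𝔓)
    (τ : PathSpace d → ℝ) (hτ : IsStoppingTime (FhatFilt T d 𝔓 hB hN) (fun ω => (τ ω : WithTop ℝ)))
    (hτfin : (Set.range τ).Finite) (hτmem : ∀ ω, τ ω ∈ Set.Icc (0 : ℝ) T)
    (Λ : Set (PathSpace d)) (hΛ : MeasurableSet[hτ.measurableSpace] Λ)
    (P₁ : @Measure (PathSpace d) m0) (hP₁ : P₁ ∈ MSet 𝔓 hτ.measurableSpace P)
    (P₂ : @Measure (PathSpace d) m0) (hP₂ : P₂ ∈ MSet 𝔓 hτ.measurableSpace P) :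
    ∃ Q ∈ 𝔓, ∀ h : PathSpace d → ℝ, Measurable[rawSA d T] h → BddFun h →
      ∫ x, h x ∂Q
        = ∫ x, (Λ.indicator (condExp hτ.measurableSpace P₁ h) x
            + Λᶜ.indicator (condExp hτ.measurableSpace P₂ h) x) ∂P := by
  have := hprob P₁ hP₁.1
  have := hprob P₂ hP₂.1
  have hAugP : ∀ u ∈ range τ, ∀ A, MeasurableSet[FhatFilt T d 𝔓 hB hN u] A →
      ∃ A', MeasurableSet[rawFilt T d u] A' ∧ A =ᵐ[P] A' := by
    rintro _ ⟨ω, rfl⟩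
    exact (hAug P hP).exists_ae_eq hB hN (hτmem ω)
  obtain ⟨τ', hτ', hτ'range, hττ'⟩ :=
    exists_isStoppingTime_ae_eq hτ hτfin (fun ω => (hτmem ω).2) hAugP
  have hτ'fin : (range τ').Finite := (hτfin.insert T).subset hτ'range
  have hτ'mem : ∀ ω, τ' ω ∈ Icc 0 T := range_subset_iff.1
    (hτ'range.trans (insert_subset (right_mem_Icc.2 hT.le) (range_subset_iff.2 hτmem)))
  obtain ⟨Λ', hΛ', hΛΛ'⟩ := exists_measurableSet_ae_eq hτ hτfin hτ' hτ'fin hττ' hAugP hΛ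
  have hτ'hat := hτ'.of_filtration_le (rawFilt_le_FhatFilt hB hN)
  have hraw_le_hat := hτ'.measurableSpace_le_of_filtration_le (rawFilt_le_FhatFilt hB hN)
  have hττ'_coe : ∀ᵐ ω ∂P, (τ ω : WithTop ℝ) = τ' ω := hττ'.mono fun _ h => congrArg _ h
  have e₁ := (hP₁.2.of_ae_eq_stoppingTime hτ hτ'hat hττ'_coe).mono hraw_le_hat
  have e₂ := (hP₂.2.of_ae_eq_stoppingTime hτ hτ'hat hττ'_coe).mono hraw_le_hat
  obtain ⟨Q, hQ, hQint⟩ :=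
    hstable P hP τ' hτ' hτ'fin hτ'mem Λ' hΛ' P₁ ⟨hP₁.1, e₁⟩ P₂ ⟨hP₂.1, e₂⟩
  refine ⟨Q, hQ, fun h hmeas hbdd => ?_⟩
  have hh₁ := hbdd.integrable hB hmeas P₁
  have hh₂ := hbdd.integrable hB hmeas P₂
  rw [hQint h hmeas hbdd,
    integral_pasting_eq (hτ'.measurableSpace_le.trans hB) e₁ e₂ hΛ' hh₁ hh₂,
    integral_pasting_eq hτ.measurableSpace_le hP₁.2 hP₂.2 hΛ hh₁ hh₂,
    setIntegral_congr_set (hP₁.2.ae_eq_of_ae_eq_stoppingTime hτ hτ'hat hττ'_coe hΛ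
      (hraw_le_hat _ hΛ') hΛΛ'),
    setIntegral_congr_set (hP₂.2.ae_eq_of_ae_eq_stoppingTime hτ hτ'hat hττ'_coe hΛ
      (hraw_le_hat _ hΛ') hΛΛ').compl]

/-- if `𝔓` is stable under `F°`-pasting and every `P ∈ 𝔓` satisfies the
augmentation hypothesis, then `𝔓` is stable under `F̂`-pasting: the pasting over a
finite-valued `F̂`-stopping time, as a measure on `F°_T`, coincides with an element of `𝔓`. -/
theorem statement6 {T : ℝ} (hT : 0 < T) {d : ℕ}
    {m0 : MeasurableSpace (PathSpace d)}
    (𝔓 : Set (@Measure (PathSpace d) m0)) (h𝔓 : 𝔓.Nonempty)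
    (hprob : ∀ P ∈ 𝔓, IsProbabilityMeasure P)
    (hB : rawSA d T ≤ m0)
    (hN : MeasurableSpace.generateFrom {N | IsPolar 𝔓 N} ≤ m0)
    (hstable : StableUnderPastingE T d 𝔓)
    (hAug : ∀ P ∈ 𝔓, AugHyp T d 𝔓 P)
    (P : @Measure (PathSpace d) m0) (hP : P ∈ 𝔓)
    (τ : PathSpace d → ℝ) (hτ : IsStoppingTime (FhatFilt T d 𝔓 hB hN) (fun ω => (τ ω : WithTop ℝ)))
    (hτfin : (Set.range τ).Finite) (hτmem : ∀ ω, τ ω ∈ Set.Icc (0 : ℝ) T)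
    (Λ : Set (PathSpace d)) (hΛ : MeasurableSet[hτ.measurableSpace] Λ)
    (P₁ : @Measure (PathSpace d) m0) (hP₁ : P₁ ∈ MSet 𝔓 hτ.measurableSpace P)
    (P₂ : @Measure (PathSpace d) m0) (hP₂ : P₂ ∈ MSet 𝔓 hτ.measurableSpace P) :
    ∃ Q ∈ 𝔓, ∀ h : PathSpace d → ℝ, Measurable[rawSA d T] h → BddFun h →
      ∫ x, h x ∂Q
        = ∫ x, (Λ.indicator (condExp hτ.measurableSpace P₁ h) x
            + Λᶜ.indicator (condExp hτ.measurableSpace P₂ h) x) ∂P :=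
  statement6_general hT 𝔓 hprob hB hN hstable hAug P hP τ hτ hτfin hτmem Λ hΛ P₁ hP₁ P₂ hP₂
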